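/- Let (L, ε, ∧_ε, ∨_ε) be a finite canonical ℰ-lattice whose lattice of fixed points Fix ε = {a₁, a₂, …, aₙ} is totally ordered, and set mᵢ = |[aᵢ]| for i = 1, …, n. Then the number of ℰ-lattice automorphisms of L equals ∏_{i=1}^{n} (mᵢ − 1)!. -/

import Mathlib

/-!
An ℰ-lattice automorphism restricts to an order automorphism of the finite chain `Fix ε`, which
must be the identity; hence it fixes every fixed point and maps each class `[a]` onto itself.
Conversely, since `a ∧_ε b = ε a ∧_ε ε b` and `a ∨_ε b = ε a ∨_ε ε b`, every permutation that
preserves the classes and fixes `Fix ε` is an automorphism. These permutations are exactly the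
independent permutations of the sets `[a] \ {a}`, which gives `∏ (|[a]| - 1)!`.
-/

/-- A canonical ℰ-lattice: a set `L` with a map `eps : L → L` and two associative,
commutative binary operations satisfying `a ∧ a = a ∨ a = ε a`,
the absorption laws `a ∧ (a ∨ b) = a ∨ (a ∧ b) = ε a`, and (canonicity)
all meets and joins are fixed points of `eps`. -/
structure CELattice (L : Type*) where
  eps : L → L
  meet : L → L → L
  join : L → L → L
  meet_assoc : ∀ a b c, meet a (meet b c) = meet (meet a b) c
  join_assoc : ∀ a b c, join a (join b c) = join (join a b) c
  meet_comm : ∀ a b, meet a b = meet b a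
  join_comm : ∀ a b, join a b = join b a
  meet_self : ∀ a, meet a a = eps a
  join_self : ∀ a, join a a = eps a
  meet_absorb : ∀ a b, meet a (join a b) = eps a
  join_absorb : ∀ a b, join a (meet a b) = eps a
  meet_canonical : ∀ a b, eps (meet a b) = meet a b
  join_canonical : ∀ a b, eps (join a b) = join a b

namespace CELattice

variable {L : Type*}

/-- The set of fixed points of `eps`. -/
def Fix (E : CELattice L) : Set L := {a | E.eps a = a}

/-- The class `[a] = {b | ε b = ε a}`. -/
def cls (E : CELattice L) (a : L) : Set L := {b | E.eps b = E.eps a}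

/-- The fixed points of `eps`, as a type. -/
abbrev FixT (E : CELattice L) : Type _ := {a : L // E.eps a = a}

/-- An ℰ-lattice isomorphism: a bijection commuting with `eps` and preserving
meets and joins. -/
def IsEIso {L₁ L₂ : Type*} (E₁ : CELattice L₁) (E₂ : CELattice L₂) (f : L₁ → L₂) : Prop :=
  Function.Bijective f ∧ (∀ a, f (E₁.eps a) = E₂.eps (f a)) ∧
    (∀ a b, f (E₁.meet a b) = E₂.meet (f a) (f b)) ∧
    (∀ a b, f (E₁.join a b) = E₂.join (f a) (f b))

end CELattice

namespace CELattice

variable {L : Type*}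

/-- The group `Aut_ℰ(L)` of ℰ-lattice automorphisms of a canonical ℰ-lattice,
as a subgroup of the symmetric group on `L`. -/
def EAut (E : CELattice L) : Subgroup (Equiv.Perm L) where
  carrier := {f : Equiv.Perm L | (∀ a, f (E.eps a) = E.eps (f a)) ∧
    (∀ a b, f (E.meet a b) = E.meet (f a) (f b)) ∧
    (∀ a b, f (E.join a b) = E.join (f a) (f b))}
  one_mem' := by simp
  mul_mem' := by
    rintro f g ⟨hf1, hf2, hf3⟩ ⟨hg1, hg2, hg3⟩
    refine ⟨fun a => ?_, fun a b => ?_, fun a b => ?_⟩ <;>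
      simp [Equiv.Perm.mul_apply, hg1, hg2, hg3, hf1, hf2, hf3]
  inv_mem' := by
    rintro f ⟨hf1, hf2, hf3⟩
    refine ⟨fun a => ?_, fun a b => ?_, fun a b => ?_⟩ <;>
      (apply f.injective;
       simp [hf1, hf2, hf3, ← Equiv.Perm.inv_def])

/-- The meet of two fixed points, as a fixed point (the lattice operation on `Fix ε`). -/
def fixMeet (E : CELattice L) (a b : E.FixT) : E.FixT :=
  ⟨E.meet a.1 b.1, E.meet_canonical _ _⟩

/-- The join of two fixed points, as a fixed point (the lattice operation on `Fix ε`). -/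
def fixJoin (E : CELattice L) (a b : E.FixT) : E.FixT :=
  ⟨E.join a.1 b.1, E.join_canonical _ _⟩

/-- The group `Aut(Fix ε)` of lattice automorphisms of the lattice of fixed points. -/
def AutFix (E : CELattice L) : Subgroup (Equiv.Perm E.FixT) where
  carrier := {σ : Equiv.Perm E.FixT | (∀ a b, σ (E.fixMeet a b) = E.fixMeet (σ a) (σ b)) ∧
    (∀ a b, σ (E.fixJoin a b) = E.fixJoin (σ a) (σ b))}
  one_mem' := by simp
  mul_mem' := by
    rintro f g ⟨hf1, hf2⟩ ⟨hg1, hg2⟩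
    refine ⟨fun a b => ?_, fun a b => ?_⟩ <;>
      simp [Equiv.Perm.mul_apply, hg1, hg2, hf1, hf2]
  inv_mem' := by
    rintro f ⟨hf1, hf2⟩
    refine ⟨fun a b => ?_, fun a b => ?_⟩ <;>
      (apply f.injective; simp [hf1, hf2, ← Equiv.Perm.inv_def])

/-- `S'([a])`: the subgroup of the symmetric group on the class `[a]`
consisting of the permutations fixing `a`. -/
def Sprime (E : CELattice L) (a : L) : Subgroup (Equiv.Perm {b : L // E.eps b = E.eps a}) where
  carrier := {σ | σ ⟨a, rfl⟩ = ⟨a, rfl⟩}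
  one_mem' := by simp
  mul_mem' := by
    intro f g hf hg
    simp only [Set.mem_setOf_eq] at *
    simp [Equiv.Perm.mul_apply, hg, hf]
  inv_mem' := by
    intro f hf
    simp only [Set.mem_setOf_eq] at *
    rw [Equiv.Perm.inv_eq_iff_eq, hf]

end CELattice


open Equiv

theorem Nat.card_subtype_and_ne {α : Type*} {p : α → Prop} {a : α} (ha : p a) [Finite α] :
    Nat.card {x // p x ∧ x ≠ a} = Nat.card {x // p x} - 1 :=
  Set.ncard_sdiff_singleton_of_mem (s := {x | p x}) ha

theorem Equiv.Perm.card_preserving_fibers_fixing_fixedPoints {α : Type*} [Fintype α]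
    [DecidableEq α] (e : α → α) (he : ∀ a, e (e a) = e a) :
    Nat.card {g : Perm α // (∀ x, e (g x) = e x) ∧ ∀ x, e x = x → g x = x} =
      ∏ a : {a // e a = a}, (Nat.card {b // e b = e a} - 1).factorial := by
  -- The level sets of `κ` are the singletons `{a}` and the sets `[a] \ {a}`, for `a` fixed.
  let κ : α → {a // e a = a} × Bool := fun x => (⟨e x, he x⟩, decide (e x = x))
  have hκ_eq {x y : α} : κ x = κ y ↔ e x = e y ∧ (e x = x ↔ e y = y) := by
    simp [κ, Prod.ext_iff, Subtype.ext_iff]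
  have hκ (g : Perm α) : κ ∘ g = κ ↔ (∀ x, e (g x) = e x) ∧ ∀ x, e x = x → g x = x := by
    simp only [funext_iff, Function.comp_apply, hκ_eq, forall_and]
    refine and_congr_right fun hge => ⟨fun hfix x hx => ?_, fun hfix x => ⟨fun hgx => ?_, ?_⟩⟩
    · rw [← (hfix x).2 hx, hge, hx]
    · refine g.injective ?_
      rw [hfix _ (he x), ← hge, hgx]
    · intro hx
      rwa [hfix x hx]
  have fiber_true (a : {a // e a = a}) : Nat.card {x // κ x = (a, true)} = 1 := by
    have hmem (x : α) : κ x = (a, true) ↔ x = a := by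
      simp only [κ, Prod.mk.injEq, Subtype.ext_iff]
      grind [a.2]
    rw [Nat.card_congr (subtypeEquivRight hmem), Nat.card_unique]
  have fiber_false (a : {a // e a = a}) :
      Nat.card {x // κ x = (a, false)} = Nat.card {b // e b = e a} - 1 := by
    have hmem (x : α) : κ x = (a, false) ↔ e x = e a ∧ x ≠ a := by
      simp only [κ, Prod.mk.injEq, Subtype.ext_iff]
      grind [a.2]
    rw [Nat.card_congr (subtypeEquivRight hmem),
      Nat.card_subtype_and_ne (p := fun x => e x = e a) rfl]
  rw [← Nat.card_congr (subtypeEquivRight hκ), Nat.card_eq_fintype_card,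
    DomMulAct.stabilizer_card, Fintype.prod_prod_type]
  refine Finset.prod_congr rfl fun a _ => ?_
  rw [Fintype.prod_bool, ← Nat.card_eq_fintype_card, ← Nat.card_eq_fintype_card, fiber_true,
    fiber_false, Nat.factorial_one, one_mul]

namespace CELattice

variable {L : Type*} (E : CELattice L)

theorem eps_eps (a : L) : E.eps (E.eps a) = E.eps a := by
  rw [← E.meet_self a, E.meet_canonical]

instance : Std.Associative E.meet := ⟨fun a b c => (E.meet_assoc a b c).symm⟩
instance : Std.Commutative E.meet := ⟨E.meet_comm⟩
instance : Std.Associative E.join := ⟨fun a b c => (E.join_assoc a b c).symm⟩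
instance : Std.Commutative E.join := ⟨E.join_comm⟩

theorem meet_eps_eps (a b : L) : E.meet (E.eps a) (E.eps b) = E.meet a b :=
  calc E.meet (E.eps a) (E.eps b) = E.meet (E.meet a a) (E.meet b b) := by
        rw [E.meet_self, E.meet_self]
    _ = E.meet (E.meet a b) (E.meet a b) := by ac_rfl
    _ = E.meet a b := by rw [E.meet_self, E.meet_canonical]

theorem join_eps_eps (a b : L) : E.join (E.eps a) (E.eps b) = E.join a b :=
  calc E.join (E.eps a) (E.eps b) = E.join (E.join a a) (E.join b b) := by
        rw [E.join_self, E.join_self]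
    _ = E.join (E.join a b) (E.join a b) := by ac_rfl
    _ = E.join a b := by rw [E.join_self, E.join_canonical]

abbrev fixLattice : Lattice E.FixT :=
  letI : Max E.FixT := ⟨E.fixJoin⟩
  letI : Min E.FixT := ⟨E.fixMeet⟩
  Lattice.mk' (fun a b => Subtype.ext (E.join_comm a b))
    (fun a b c => Subtype.ext (E.join_assoc a b c).symm) (fun a b => Subtype.ext (E.meet_comm a b))
    (fun a b c => Subtype.ext (E.meet_assoc a b c).symm)
    (fun a b => Subtype.ext ((E.join_absorb a b).trans a.2))
    (fun a b => Subtype.ext ((E.meet_absorb a b).trans a.2))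

def FixIsChain : Prop :=
  ∀ a b : L, E.eps a = a → E.eps b = b → E.meet a b = a ∨ E.meet a b = b

noncomputable abbrev fixLinearOrder {E : CELattice L} (hchain : E.FixIsChain) :
    LinearOrder E.FixT :=
  letI := E.fixLattice
  haveI : Std.Total (α := E.FixT) (· ≤ ·) :=
    ⟨fun a b => (hchain a b a.2 b.2).imp (fun h => inf_eq_left.mp (Subtype.ext h))
      (fun h => inf_eq_right.mp (Subtype.ext h))⟩
  open Classical in Lattice.toLinearOrder E.FixT

theorem mem_eaut_of_eps_apply {f : Perm L} (hε : ∀ x, E.eps (f x) = E.eps x)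
    (hfix : ∀ x, E.eps x = x → f x = x) : f ∈ E.EAut := by
  refine ⟨fun x => ?_, fun x y => ?_, fun x y => ?_⟩
  · rw [hfix _ (E.eps_eps x), hε]
  · rw [hfix _ (E.meet_canonical x y), ← E.meet_eps_eps (f x), hε, hε, E.meet_eps_eps]
  · rw [hfix _ (E.join_canonical x y), ← E.join_eps_eps (f x), hε, hε, E.join_eps_eps]

theorem apply_eq_self_of_mem_eaut [Finite L] (hchain : E.FixIsChain) {f : Perm L}
    (hf : f ∈ E.EAut) {x : L} (hx : E.eps x = x) : f x = x := by
  let := fixLinearOrder hchain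
  have hfixed (y : L) : E.eps (f y) = f y ↔ E.eps y = y := by rw [← hf.1, f.injective.eq_iff]
  let g : E.FixT ≃o E.FixT :=
    { toEquiv := f.subtypePerm hfixed
      map_rel_iff' := fun {a b} => by
        rw [← inf_eq_left, ← inf_eq_left (a := a), Subtype.ext_iff, Subtype.ext_iff]
        show E.meet (f a) (f b) = f a ↔ E.meet a b = a
        rw [← hf.2.1, f.injective.eq_iff] }
  exact congrArg (fun h : E.FixT ≃o E.FixT => (h ⟨x, hx⟩ : L))
    (Subsingleton.elim g (OrderIso.refl _))

theorem eps_apply_of_mem_eaut [Finite L] (hchain : E.FixIsChain) {f : Perm L}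
    (hf : f ∈ E.EAut) (x : L) : E.eps (f x) = E.eps x := by
  rw [← hf.1, E.apply_eq_self_of_mem_eaut hchain hf (E.eps_eps x)]

theorem mem_eaut_iff_of_chain [Finite L] (hchain : E.FixIsChain) (f : Perm L) :
    f ∈ E.EAut ↔ (∀ x, E.eps (f x) = E.eps x) ∧ ∀ x, E.eps x = x → f x = x :=
  ⟨fun hf => ⟨E.eps_apply_of_mem_eaut hchain hf, fun _ => E.apply_eq_self_of_mem_eaut hchain hf⟩,
    fun h => E.mem_eaut_of_eps_apply h.1 h.2⟩

end CELattice

open CELattice in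
theorem card_eaut_of_finite_chain_fix_general {L : Type*} [Fintype L] [DecidableEq L]
    (E : CELattice L)
    (hchain : ∀ a b : L, E.eps a = a → E.eps b = b → E.meet a b = a ∨ E.meet a b = b) :
    Nat.card (EAut E) =
      ∏ a : E.FixT, (Nat.card {b : L // E.eps b = E.eps (a : L)} - 1).factorial := by
  rw [Nat.card_congr (subtypeEquivRight (E.mem_eaut_iff_of_chain hchain))]
  exact Perm.card_preserving_fibers_fixing_fixedPoints E.eps E.eps_eps

open CELattice in
/-- Corollary 3 (2.1): if `L` is a finite canonical ℰ-lattice whose lattice of fixed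
points is fully (totally) ordered, then `|Aut_ℰ(L)| = ∏_{i=1}^{n} (mᵢ - 1)!`, where
`mᵢ = |[aᵢ]|` and `a₁, …, aₙ` are the fixed points of `ε`. -/
theorem card_eaut_of_finite_chain_fix {L : Type*} [Nonempty L] [Fintype L] [DecidableEq L]
    (E : CELattice L)
    (hchain : ∀ a b : L, E.eps a = a → E.eps b = b → E.meet a b = a ∨ E.meet a b = b) :
    Nat.card (EAut E) =
      ∏ a : E.FixT, (Nat.card {b : L // E.eps b = E.eps (a : L)} - 1).factorial :=
  card_eaut_of_finite_chain_fix_general E hchain
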